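/- For any solution u of the initial value problem, the limit as r → +∞ of (u''(r)/u'(r))·(ψ(r)/ψ'(r)) exists in the extended real line [−∞,+∞]. -/

import Mathlib

/-!
With `φ = ψ'/ψ` and `R = -exp u / u'`, the equation gives `(u''/u') (ψ/ψ') = -(N-1) + R/φ`
wherever `u' ≠ 0`; the limit is `0`.

First, `u' < 0` eventually: at a zero of `u'` we have `u'' = -exp u < 0`, and `u' ≥ 0` forever
would force `u''` below a negative constant. Then `u' → 0`, because `u' ≤ -ε` makes `u''` positive as soon
as `exp u / φ` is small; this holds when `φ → ∞` since `u` decreases, and when `φ → Λ < ∞` because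
then `u → -∞`.

The key identity is `R' = R (u' + (N-1)φ - R)`: `R` follows a logistic equation whose moving
equilibrium converges, so `R` converges to the same limit. If `Λ < ∞` this gives
`R → (N-1)Λ`. If `Λ = ∞`, `P = R/φ` satisfies `P' = φ P ((N-1) + (u' - (log φ)')/φ - P)`, and
the bound on `(log φ)'` makes this equilibrium tend to `N-1`.
-/

open Set Real Filter Topology

lemma ContDiffOn.eventually_hasDerivAt_deriv {f : ℝ → ℝ} {a : ℝ} (hf : ContDiffOn ℝ 2 f (Ici a)) :
    ∀ᶠ r in atTop, HasDerivAt f (deriv f r) r ∧ DifferentiableAt ℝ (deriv f) r := by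
  filter_upwards [eventually_gt_atTop a] with r hr
  have hf' := hf.mono Ioi_subset_Ici_self
  refine ⟨((hf'.contDiffAt (Ioi_mem_nhds hr)).differentiableAt (by norm_num)).hasDerivAt, ?_⟩
  exact ((hf'.deriv_of_isOpen isOpen_Ioi (m := 1) (by norm_num)).differentiableOn one_ne_zero r
    hr).differentiableAt (Ioi_mem_nhds hr)

lemma image_le_of_hasDerivAt_neg_of_eq {f f' : ℝ → ℝ} {θ a b : ℝ}
    (hf : ∀ x ∈ Icc a b, HasDerivAt f (f' x) x) (ha : f a ≤ θ)
    (hθ : ∀ x ∈ Ico a b, f x = θ → f' x < 0) : ∀ x ∈ Icc a b, f x ≤ θ :=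
  image_le_of_deriv_right_lt_deriv_boundary (B := fun _ => θ)
    (fun x hx => (hf x hx).continuousAt.continuousWithinAt)
    (fun x hx => (hf x (Ico_subset_Icc_self hx)).hasDerivWithinAt) ha
    (fun _ => hasDerivAt_const _ θ) hθ

lemma tendsto_atBot_of_hasDerivAt_le_neg {f f' : ℝ → ℝ} {c : ℝ} (hc : 0 < c)
    (hf : ∀ᶠ x in atTop, HasDerivAt f (f' x) x ∧ f' x ≤ -c) : Tendsto f atTop atBot := by
  obtain ⟨x₀, hx₀⟩ := eventually_atTop.1 hf
  have hdecay : ∀ x ≥ x₀, f x ≤ f x₀ + c * x₀ + -c * x := by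
    intro x hx
    have := (convex_Ici x₀).image_sub_le_mul_sub_of_deriv_le (C := -c)
      (fun y hy => (hx₀ y hy).1.continuousAt.continuousWithinAt)
      (fun y hy => (hx₀ y (interior_subset hy)).1.differentiableAt.differentiableWithinAt)
      (fun y hy => (hx₀ y (interior_subset hy)).1.deriv ▸ (hx₀ y (interior_subset hy)).2)
      x₀ self_mem_Ici x hx hx
    linarith
  refine tendsto_atBot_mono' _ (eventually_atTop.2 ⟨x₀, hdecay⟩) ?_
  exact tendsto_atBot_add_const_left _ _ (tendsto_id.const_mul_atTop_of_neg (neg_neg_of_pos hc))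

lemma eventually_le_of_hasDerivAt_le_neg {f f' : ℝ → ℝ} {θ c : ℝ} (hc : 0 < c)
    (hf : ∀ᶠ x in atTop, HasDerivAt f (f' x) x ∧ (θ ≤ f x → f' x ≤ -c)) :
    ∀ᶠ x in atTop, f x ≤ θ := by
  obtain ⟨x₀, hx₀⟩ := eventually_atTop.1 hf
  by_cases hcross : ∃ s ≥ x₀, f s ≤ θ
  · obtain ⟨s, hs, hfs⟩ := hcross
    refine eventually_atTop.2 ⟨s, fun x hx => ?_⟩
    refine image_le_of_hasDerivAt_neg_of_eq (fun y hy => (hx₀ y (hs.trans hy.1)).1) hfs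
      (fun y hy hfy => ?_) x ⟨hx, le_rfl⟩
    linarith [(hx₀ y (hs.trans hy.1)).2 hfy.ge]
  · push Not at hcross
    refine (tendsto_atBot_of_hasDerivAt_le_neg (f' := f') hc ?_).eventually (eventually_le_atBot θ)
    exact eventually_atTop.2 ⟨x₀, fun x hx => ⟨(hx₀ x hx).1, (hx₀ x hx).2 (hcross x hx).le⟩⟩

lemma eventually_ge_of_le_hasDerivAt {f f' : ℝ → ℝ} {θ c : ℝ} (hc : 0 < c)
    (hf : ∀ᶠ x in atTop, HasDerivAt f (f' x) x ∧ (f x ≤ θ → c ≤ f' x)) :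
    ∀ᶠ x in atTop, θ ≤ f x := by
  have := eventually_le_of_hasDerivAt_le_neg (f := fun x => -f x) (f' := fun x => -f' x)
    (θ := -θ) hc (hf.mono fun x hx => ⟨hx.1.neg, fun h => by linarith [hx.2 (by linarith)]⟩)
  exact this.mono fun x hx => by linarith

lemma tendsto_of_hasDerivAt_logistic {x m β : ℝ → ℝ} {B c : ℝ} (hB : 0 < B) (hc : 0 < c)
    (hx : ∀ᶠ r in atTop, HasDerivAt x (m r * x r * (β r - x r)) r ∧ 0 < x r ∧ c ≤ m r)
    (hβ : Tendsto β atTop (𝓝 B)) : Tendsto x atTop (𝓝 B) := by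
  have upper : ∀ θ > B, ∀ᶠ r in atTop, x r ≤ θ := by
    intro θ hθ
    refine eventually_le_of_hasDerivAt_le_neg (f' := fun r => m r * x r * (β r - x r))
      (c := c * θ * ((θ - B) / 2))
      (mul_pos (mul_pos hc (by linarith)) (by linarith)) ?_
    filter_upwards [hx, hβ.eventually (gt_mem_nhds (show B < (B + θ) / 2 by linarith))]
      with r ⟨hd, hxpos, hm⟩ hβr
    refine ⟨hd, fun hxθ => ?_⟩
    have hgap : β r - x r ≤ -((θ - B) / 2) := by linarith
    have hmx : c * θ ≤ m r * x r := mul_le_mul hm hxθ (by linarith) (by linarith)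
    calc m r * x r * (β r - x r) ≤ m r * x r * -((θ - B) / 2) :=
          mul_le_mul_of_nonneg_left hgap (by nlinarith)
      _ ≤ c * θ * -((θ - B) / 2) := mul_le_mul_of_nonpos_right hmx (by linarith)
      _ = -(c * θ * ((θ - B) / 2)) := by ring
  have lower : ∀ θ < B, ∀ᶠ r in atTop, θ ≤ x r := by
    intro θ hθ
    rcases le_or_gt θ 0 with hθ0 | hθ0
    · exact hx.mono fun r hr => hθ0.trans hr.2.1.le
    -- for `log x` the growth rate `m (β - x)` stays bounded below even where `x` is tiny
    have hlog := eventually_ge_of_le_hasDerivAt (f := fun r => log (x r))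
      (f' := fun r => m r * x r * (β r - x r) / x r) (θ := log θ)
      (c := c * ((B - θ) / 2)) (mul_pos hc (by linarith)) ?_
    · filter_upwards [hlog, hx] with r hr hxr
      exact (log_le_log_iff hθ0 hxr.2.1).1 hr
    filter_upwards [hx, hβ.eventually (lt_mem_nhds (show (θ + B) / 2 < B by linarith))]
      with r ⟨hd, hxpos, hm⟩ hβr
    refine ⟨hd.log hxpos.ne', fun hle => ?_⟩
    have hxθ : x r ≤ θ := (log_le_log_iff hxpos hθ0).1 hle
    rw [show m r * x r * (β r - x r) / x r = m r * (β r - x r) by field_simp]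
    exact mul_le_mul hm (by linarith) (by linarith) (by linarith)
  refine tendsto_order.2 ⟨fun b hb => ?_, fun b hb => ?_⟩
  · filter_upwards [lower ((b + B) / 2) (by linarith)] with r hr
    linarith
  · filter_upwards [upper ((b + B) / 2) (by linarith)] with r hr
    linarith

lemma hasDerivAt_deriv_log_mul {φ : ℝ → ℝ} {r : ℝ} (hφ : DifferentiableAt ℝ φ r)
    (hφ0 : φ r ≠ 0) : HasDerivAt φ (deriv (fun s => log (φ s)) r * φ r) r := by
  rw [(hφ.hasDerivAt.log hφ0).deriv, div_mul_cancel₀ _ hφ0]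
  exact hφ.hasDerivAt

lemma hasDerivAt_div_of_logistic {x φ : ℝ → ℝ} {b g r : ℝ} (hx : HasDerivAt x (x r * (b - x r)) r)
    (hφ : HasDerivAt φ (g * φ r) r) (hφ0 : φ r ≠ 0) :
    HasDerivAt (fun s => x s / φ s) (φ r * (x r / φ r) * ((b - g) / φ r - x r / φ r)) r := by
  refine (hx.fun_div hφ hφ0).congr_deriv ?_
  field_simp
  ring

namespace GelfandODE

variable {u φ : ℝ → ℝ} {a : ℝ}

lemma eventually_deriv_neg (ha : 0 ≤ a) (hφ : ∀ᶠ r in atTop, 0 < φ r)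
    (hu : ∀ᶠ r in atTop, HasDerivAt u (deriv u r) r ∧
      HasDerivAt (deriv u) (-(a * φ r * deriv u r + exp (u r))) r) :
    ∀ᶠ r in atTop, deriv u r < 0 := by
  obtain ⟨r₀, h⟩ := eventually_atTop.1 (hu.and hφ)
  by_cases hcross : ∃ s ≥ r₀, deriv u s < 0
  · obtain ⟨s, hs, hus⟩ := hcross
    have hle : ∀ t ≥ s, deriv u t ≤ 0 := fun t ht =>
      image_le_of_hasDerivAt_neg_of_eq (fun y hy => (h y (hs.trans hy.1)).1.2) hus.le
        (fun y _ hy => by simp [hy, exp_pos]) t ⟨ht, le_rfl⟩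
    refine eventually_atTop.2 ⟨s, fun t ht => (hle t ht).lt_of_ne fun ht0 => ?_⟩
    rcases ht.eq_or_lt with rfl | hst
    · exact hus.ne ht0
    have hmax : IsLocalMax (deriv u) t :=
      Filter.mem_of_superset (Ioi_mem_nhds hst) fun y hy => (hle y (le_of_lt hy)).trans ht0.ge
    have := hmax.hasDerivAt_eq_zero (h t (hs.trans ht)).1.2
    simp [ht0, (exp_pos _).ne'] at this
  · push Not at hcross
    have hmono : MonotoneOn u (Ici r₀) :=
      monotoneOn_of_hasDerivWithinAt_nonneg (convex_Ici r₀)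
        (fun y hy => (h y hy).1.1.continuousAt.continuousWithinAt)
        (fun y hy => (h y (interior_subset hy)).1.1.hasDerivWithinAt)
        (fun y hy => hcross y (interior_subset hy))
    have hdown : Tendsto (deriv u) atTop atBot := by
      refine tendsto_atBot_of_hasDerivAt_le_neg (exp_pos (u r₀))
        (eventually_atTop.2 ⟨r₀, fun y hy => ⟨(h y hy).1.2, ?_⟩⟩)
      have hdrift : 0 ≤ a * φ y * deriv u y :=
        mul_nonneg (mul_nonneg ha (h y hy).2.le) (hcross y hy)
      have hexp : exp (u r₀) ≤ exp (u y) := exp_le_exp.2 (hmono self_mem_Ici hy hy)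
      linarith
    obtain ⟨y, hy⟩ := ((hdown.eventually (eventually_lt_atBot 0)).and
      (eventually_atTop.2 ⟨r₀, hcross⟩)).exists
    exact absurd hy.2 hy.1.not_ge

lemma exists_antitoneOn_Ici (hneg : ∀ᶠ r in atTop, deriv u r < 0)
    (hu : ∀ᶠ r in atTop, HasDerivAt u (deriv u r) r) : ∃ s, AntitoneOn u (Ici s) := by
  obtain ⟨s, hs⟩ := eventually_atTop.1 (hu.and hneg)
  exact ⟨s, antitoneOn_of_hasDerivWithinAt_nonpos (convex_Ici s)
    (fun y hy => (hs y hy).1.continuousAt.continuousWithinAt)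
    (fun y hy => (hs y (interior_subset hy)).1.hasDerivWithinAt)
    (fun y hy => (hs y (interior_subset hy)).2.le)⟩

lemma tendsto_exp_div_of_tendsto_atTop (hφ : Tendsto φ atTop atTop)
    (hneg : ∀ᶠ r in atTop, deriv u r < 0) (hu : ∀ᶠ r in atTop, HasDerivAt u (deriv u r) r) :
    Tendsto (fun r => exp (u r) / φ r) atTop (𝓝 0) := by
  obtain ⟨s, hs⟩ := exists_antitoneOn_Ici hneg hu
  have hφpos := hφ.eventually_gt_atTop 0
  refine tendsto_of_tendsto_of_tendsto_of_le_of_le' tendsto_const_nhds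
    ((tendsto_const_nhds (x := exp (u s))).div_atTop hφ) ?_ ?_
  · filter_upwards [hφpos] with r hr
    positivity
  · filter_upwards [hφpos, eventually_ge_atTop s] with r hr hsr
    exact div_le_div_of_nonneg_right (exp_le_exp.2 (hs self_mem_Ici hsr hsr)) hr.le

lemma tendsto_atBot_of_bounded_coeff (ha : 0 < a) {M : ℝ} (hM : 0 < M)
    (hφ : ∀ᶠ r in atTop, 0 ≤ φ r ∧ φ r ≤ M) (hneg : ∀ᶠ r in atTop, deriv u r < 0)
    (hu : ∀ᶠ r in atTop, HasDerivAt u (deriv u r) r ∧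
      HasDerivAt (deriv u) (-(a * φ r * deriv u r + exp (u r))) r) :
    Tendsto u atTop atBot := by
  by_contra hbot
  obtain ⟨s, hs⟩ := exists_antitoneOn_Ici hneg (hu.mono fun _ h => h.1)
  obtain ⟨b, hb⟩ : ∃ b, ∀ᶠ r in atTop, b ≤ u r := by
    rw [tendsto_atBot] at hbot
    push Not at hbot
    obtain ⟨b, hb⟩ := hbot
    refine ⟨b, eventually_atTop.2 ⟨s, fun r hr => ?_⟩⟩
    obtain ⟨r', hbr', hrr'⟩ := (hb.and_eventually (eventually_ge_atTop r)).exists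
    exact hbr'.le.trans (hs hr (hr.trans hrr') hrr')
  -- once `exp u ≥ exp b`, the equation forces `u' ≤ -δ`, so `u → -∞` after all
  set δ := exp b / (2 * (a * M)) with hδ
  have hδpos : 0 < δ := by positivity
  have hslope : ∀ᶠ r in atTop, deriv u r ≤ -δ := by
    refine eventually_le_of_hasDerivAt_le_neg (c := exp b / 2)
      (f' := fun r => -(a * φ r * deriv u r + exp (u r))) (by positivity) ?_
    filter_upwards [hu, hφ, hb] with r ⟨_, hd⟩ ⟨hφ0, hφM⟩ hbr
    refine ⟨hd, fun hge => ?_⟩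
    have hdrift : a * φ r * -δ ≤ a * φ r * deriv u r :=
      mul_le_mul_of_nonneg_left hge (mul_nonneg ha.le hφ0)
    have hφδ : a * φ r * δ ≤ a * M * δ :=
      mul_le_mul_of_nonneg_right (mul_le_mul_of_nonneg_left hφM ha.le) hδpos.le
    have hMδ : a * M * δ = exp b / 2 := by
      rw [hδ]
      field_simp
    have hexp : exp b ≤ exp (u r) := exp_le_exp.2 hbr
    linarith
  exact hbot (tendsto_atBot_of_hasDerivAt_le_neg hδpos
    ((hu.and hslope).mono fun _ h => ⟨h.1.1, h.2⟩))

lemma tendsto_deriv_zero (ha : 0 < a) {m : ℝ} (hm : 0 < m) (hφ : ∀ᶠ r in atTop, m ≤ φ r)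
    (hexp : Tendsto (fun r => exp (u r) / φ r) atTop (𝓝 0))
    (hneg : ∀ᶠ r in atTop, deriv u r < 0)
    (hu : ∀ᶠ r in atTop, HasDerivAt (deriv u) (-(a * φ r * deriv u r + exp (u r))) r) :
    Tendsto (deriv u) atTop (𝓝 0) := by
  refine tendsto_order.2 ⟨fun b hb => ?_, fun b hb => hneg.mono fun r hr => hr.trans hb⟩
  have hε : 0 < a * (-b / 4) := mul_pos ha (by linarith)
  have hge := eventually_ge_of_le_hasDerivAt (θ := b / 2) (c := m * (a * (-b / 4)))
    (mul_pos hm hε) (f := deriv u) (f' := fun r => -(a * φ r * deriv u r + exp (u r))) ?_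
  · exact hge.mono fun r hr => by linarith
  filter_upwards [hu, hφ, hexp.eventually (gt_mem_nhds hε)] with r hd hφr hE
  refine ⟨hd, fun hle => ?_⟩
  have hφpos : 0 < φ r := hm.trans_le hφr
  have hE' : exp (u r) < a * (-b / 4) * φ r := (div_lt_iff₀ hφpos).1 hE
  have hdrift : a * φ r * deriv u r ≤ a * φ r * (b / 2) :=
    mul_le_mul_of_nonneg_left hle (by positivity)
  have hm' : m * (a * (-b / 4)) ≤ φ r * (a * (-b / 4)) := mul_le_mul_of_nonneg_right hφr hε.le
  nlinarith

lemma hasDerivAt_neg_exp_div_deriv {r : ℝ} (hu : HasDerivAt u (deriv u r) r)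
    (hu' : HasDerivAt (deriv u) (-(a * φ r * deriv u r + exp (u r))) r) (hne : deriv u r ≠ 0) :
    HasDerivAt (fun s => -(exp (u s) / deriv u s))
      (-(exp (u r) / deriv u r) * (deriv u r + a * φ r - -(exp (u r) / deriv u r))) r := by
  refine (hu.exp.fun_div hu' hne).fun_neg.congr_deriv ?_
  field_simp
  ring

lemma deriv_deriv_div_deriv_mul_inv {r : ℝ}
    (hu' : HasDerivAt (deriv u) (-(a * φ r * deriv u r + exp (u r))) r) (hne : deriv u r ≠ 0)
    (hφ : φ r ≠ 0) :
    deriv (deriv u) r / deriv u r * (φ r)⁻¹ = -a + -(exp (u r) / deriv u r) / φ r := by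
  rw [hu'.deriv]
  field_simp
  ring

theorem tendsto_deriv_deriv_div_deriv_mul_inv_of_tendsto_atTop (ha : 0 < a)
    (hφ : Tendsto φ atTop atTop) (hφd : ∀ᶠ r in atTop, DifferentiableAt ℝ φ r) {C : ℝ}
    (hG : ∀ᶠ r in atTop, |deriv (fun s => log (φ s)) r| ≤ C)
    (hu : ∀ᶠ r in atTop, HasDerivAt u (deriv u r) r ∧
      HasDerivAt (deriv u) (-(a * φ r * deriv u r + exp (u r))) r) :
    Tendsto (fun r => deriv (deriv u) r / deriv u r * (φ r)⁻¹) atTop (𝓝 0) := by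
  have hφpos := hφ.eventually_gt_atTop 0
  have hneg := eventually_deriv_neg ha.le hφpos hu
  have hexp := tendsto_exp_div_of_tendsto_atTop hφ hneg (hu.mono fun _ h => h.1)
  have hu'0 := tendsto_deriv_zero ha one_pos (hφ.eventually_ge_atTop 1) hexp hneg
    (hu.mono fun _ h => h.2)
  set G := deriv (fun s => log (φ s))
  have hβ : Tendsto (fun r => (deriv u r + a * φ r - G r) / φ r) atTop (𝓝 a) := by
    have hbdd : ∀ᶠ r in atTop, ‖deriv u r - G r‖ ≤ 1 + C := by
      filter_upwards [hG, hu'0.eventually (Metric.ball_mem_nhds 0 one_pos)] with r hGr hur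
      rw [Real.norm_eq_abs]
      rw [Real.dist_eq, sub_zero] at hur
      linarith [abs_sub (deriv u r) (G r)]
    have hsmall := hφ.inv_tendsto_atTop.zero_mul_isBoundedUnder_le
      (isBoundedUnder_of_eventually_le hbdd)
    have := (tendsto_const_nhds (x := a)).add hsmall
    rw [add_zero] at this
    refine this.congr' ?_
    filter_upwards [hφpos] with r hr
    simp only [Pi.inv_apply]
    field_simp
    ring
  have hP := tendsto_of_hasDerivAt_logistic (x := fun r => -(exp (u r) / deriv u r) / φ r)
    (m := φ) ha one_pos ?_ hβ
  · have := (tendsto_const_nhds (x := -a)).add hP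
    rw [neg_add_cancel] at this
    refine this.congr' ?_
    filter_upwards [hu, hneg, hφpos] with r hr hn hp
    exact (deriv_deriv_div_deriv_mul_inv hr.2 hn.ne hp.ne').symm
  filter_upwards [hu, hneg, hφpos, hφd, hφ.eventually_ge_atTop 1] with r ⟨hd, hd'⟩ hn hp hdφ h1
  refine ⟨hasDerivAt_div_of_logistic (hasDerivAt_neg_exp_div_deriv hd hd' hn.ne)
    (hasDerivAt_deriv_log_mul hdφ hp.ne') hp.ne', div_pos ?_ hp, h1⟩
  exact neg_pos.2 (div_neg_of_pos_of_neg (exp_pos _) hn)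

theorem tendsto_deriv_deriv_div_deriv_mul_inv_of_tendsto (ha : 0 < a) {l : ℝ} (hl : 0 < l)
    (hφ : Tendsto φ atTop (𝓝 l))
    (hu : ∀ᶠ r in atTop, HasDerivAt u (deriv u r) r ∧
      HasDerivAt (deriv u) (-(a * φ r * deriv u r + exp (u r))) r) :
    Tendsto (fun r => deriv (deriv u) r / deriv u r * (φ r)⁻¹) atTop (𝓝 0) := by
  have hφpos : ∀ᶠ r in atTop, 0 < φ r := hφ.eventually (lt_mem_nhds hl)
  have hneg := eventually_deriv_neg ha.le hφpos hu
  have hbot := tendsto_atBot_of_bounded_coeff ha (M := l + 1) (by linarith)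
    ((hφpos.and (hφ.eventually (gt_mem_nhds (lt_add_one l)))).mono fun _ h => ⟨h.1.le, h.2.le⟩)
    hneg hu
  have hexp : Tendsto (fun r => exp (u r) / φ r) atTop (𝓝 0) := by
    have := (tendsto_exp_atBot.comp hbot).div hφ hl.ne'
    rwa [zero_div] at this
  have hu'0 := tendsto_deriv_zero ha (half_pos hl) (hφ.eventually (le_mem_nhds (half_lt_self hl)))
    hexp hneg (hu.mono fun _ h => h.2)
  have hR := tendsto_of_hasDerivAt_logistic (x := fun r => -(exp (u r) / deriv u r))
    (m := fun _ => 1) (β := fun r => deriv u r + a * φ r) (mul_pos ha hl) one_pos ?_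
    (by simpa using hu'0.add (hφ.const_mul a))
  · have := (tendsto_const_nhds (x := -a)).add (hR.div hφ hl.ne')
    rw [mul_div_cancel_right₀ _ hl.ne', neg_add_cancel] at this
    refine this.congr' ?_
    filter_upwards [hu, hneg, hφpos] with r hr hn hp
    exact (deriv_deriv_div_deriv_mul_inv hr.2 hn.ne hp.ne').symm
  filter_upwards [hu, hneg] with r ⟨hd, hd'⟩ hn
  exact ⟨(hasDerivAt_neg_exp_div_deriv hd hd' hn.ne).congr_deriv (by ring),
    neg_pos.2 (div_neg_of_pos_of_neg (exp_pos _) hn), le_rfl⟩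

end GelfandODE

theorem statement2_general (N : ℕ) (hN : 2 ≤ N) (ψ : ℝ → ℝ)
    (hψC2 : ContDiffOn ℝ 2 ψ (Ici 0))
    (hψpos : ∀ r > (0:ℝ), ψ r > 0)
    (Λ : EReal) (hΛpos : 0 < Λ)
    (hA3 : Filter.Tendsto (fun r => ((deriv ψ r / ψ r : ℝ) : EReal)) Filter.atTop (nhds Λ))
    (hA4 : Λ = ⊤ → ∃ C : ℝ, ∀ᶠ r in Filter.atTop,
      |deriv (fun s => Real.log (deriv ψ s / ψ s)) r| ≤ C)
    (u : ℝ → ℝ)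
    (huC2 : ContDiffOn ℝ 2 u (Ici 0))
    (hode : ∀ r > (0:ℝ), deriv (deriv u) r + ((N : ℝ) - 1) * (deriv ψ r / ψ r) * deriv u r
      + Real.exp (u r) = 0)
    : ∃ L : EReal, Tendsto
        (fun r => (((deriv (deriv u) r / deriv u r) * (ψ r / deriv ψ r) : ℝ) : EReal))
        atTop (nhds L) := by
  have ha : (0 : ℝ) < N - 1 := by
    have : (2 : ℝ) ≤ N := by exact_mod_cast hN
    linarith
  have hu : ∀ᶠ r in atTop, HasDerivAt u (deriv u r) r ∧ HasDerivAt (deriv u)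
      (-(((N : ℝ) - 1) * (deriv ψ r / ψ r) * deriv u r + exp (u r))) r := by
    filter_upwards [huC2.eventually_hasDerivAt_deriv, eventually_gt_atTop 0] with r ⟨hd, hd'⟩ hr
    exact ⟨hd, hd'.hasDerivAt.congr_deriv (by linarith [hode r hr])⟩
  have key : Tendsto (fun r => deriv (deriv u) r / deriv u r * (deriv ψ r / ψ r)⁻¹) atTop
      (𝓝 0) := by
    induction Λ with
    | bot => exact absurd hΛpos not_lt_bot
    | top =>
      obtain ⟨C, hC⟩ := hA4 rfl
      refine GelfandODE.tendsto_deriv_deriv_div_deriv_mul_inv_of_tendsto_atTop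
        (φ := fun r => deriv ψ r / ψ r) ha (EReal.tendsto_coe_nhds_top_iff.1 hA3) ?_ hC hu
      filter_upwards [hψC2.eventually_hasDerivAt_deriv, eventually_gt_atTop 0] with r ⟨hd, hd'⟩ hr
      exact hd'.div hd.differentiableAt (hψpos r hr).ne'
    | coe l =>
      exact GelfandODE.tendsto_deriv_deriv_div_deriv_mul_inv_of_tendsto
        (φ := fun r => deriv ψ r / ψ r) ha
        (EReal.coe_pos.1 hΛpos) (EReal.tendsto_coe.1 hA3) hu
  exact ⟨0, EReal.tendsto_coe.2 (by simpa only [inv_div] using key)⟩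

theorem statement2 (N : ℕ) (hN : 2 ≤ N) (ψ : ℝ → ℝ)
    (hψC2 : ContDiffOn ℝ 2 ψ (Ici 0))
    (hψpos : ∀ r > (0:ℝ), ψ r > 0)
    (hψ0 : ψ 0 = 0) (hψ''0 : deriv (deriv ψ) 0 = 0) (hψ'0 : deriv ψ 0 = 1)
    (hψ'pos : ∀ r > (0:ℝ), deriv ψ r > 0)
    (Λ : EReal) (hΛpos : 0 < Λ)
    (hA3 : Filter.Tendsto (fun r => ((deriv ψ r / ψ r : ℝ) : EReal)) Filter.atTop (nhds Λ))
    (hA4 : Λ = ⊤ → ∃ C : ℝ, ∀ᶠ r in Filter.atTop,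
      |deriv (fun s => Real.log (deriv ψ s / ψ s)) r| ≤ C)
    (α : ℝ) (u : ℝ → ℝ)
    (huC2 : ContDiffOn ℝ 2 u (Ici 0)) (hu0 : u 0 = α) (hu'0 : deriv u 0 = 0)
    (hode : ∀ r > (0:ℝ), deriv (deriv u) r + ((N : ℝ) - 1) * (deriv ψ r / ψ r) * deriv u r
      + Real.exp (u r) = 0)
    : ∃ L : EReal, Tendsto
        (fun r => (((deriv (deriv u) r / deriv u r) * (ψ r / deriv ψ r) : ℝ) : EReal))
        atTop (nhds L) :=
  statement2_general N hN ψ hψC2 hψpos Λ hΛpos hA3 hA4 u huC2 hode
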